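/- Let ν be a positive Borel measure on ℂ that is finite on compact sets. The following three statements are pairwise equivalent: (1) for all real numbers t1 < t2, ∫_{ℂ⁺} ω(z,[t1,t2]) dν(z) < +∞ (so the balayage of ν out of ℂ⁺ exists as a positive Borel measure finite on compact sets); (2) there exists a bounded Borel set B ⊂ ℝ with positive Lebesgue measure such that ∫_{ℂ⁺} ω(z,B) dν(z) < +∞; (3) there exists r0 > 0 such that ∫_{{z ∈ ℂ⁺ : |z| ≥ r0}} Im z/|z|² dν(z) < +∞ (the Blaschke condition near infinity for ℂ⁺). -/

import Mathlib

open MeasureTheory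

/-- The Poisson kernel of the open upper half-plane at `z ∈ ℂ⁺` and `t ∈ ℝ`. -/
noncomputable def poissonKer (z : ℂ) (t : ℝ) : ℝ :=
  (1 / Real.pi) * (z.im / ((t - z.re) ^ 2 + z.im ^ 2))

/-- Harmonic measure of a Borel set `B ⊆ ℝ` at the point `z` for the open upper
half-plane, given by the Poisson integral of the indicator of `B`. -/
noncomputable def omegaSet (z : ℂ) (B : Set ℝ) : ℝ :=
  ∫ t in B, poissonKer z t

/-!
For `B ⊆ [-M, M]` and `‖z‖ ≥ 2M`, every `t ∈ B` satisfies `‖z‖ / 2 ≤ ‖z - t‖ ≤ 2 ‖z‖`, so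
`ω(z, B)` is comparable to `|B| · Im z / ‖z‖²` with constants independent of `z`. Hence away
from a ball the integrals in (2) and (3) control each other. On a ball, `ω(z, B) ≤ 1` because the
Poisson kernel has total mass one, and `ν` of a ball is finite.
-/

lemma poissonKer_eq_mul_inv_one_add_sq (z : ℂ) (t : ℝ) :
    poissonKer z t = (Real.pi * z.im)⁻¹ * (1 + ((t - z.re) / z.im) ^ 2)⁻¹ := by
  rcases eq_or_ne z.im 0 with h | h
  · simp [poissonKer, h]
  · unfold poissonKer
    field_simp
    ring

lemma poissonKer_eq_div_norm_sq (z : ℂ) (t : ℝ) :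
    poissonKer z t = Real.pi⁻¹ * z.im / ‖z - t‖ ^ 2 := by
  rw [poissonKer, Complex.sq_norm, Complex.normSq_apply]
  simp only [Complex.sub_re, Complex.ofReal_re, Complex.sub_im, Complex.ofReal_im, sub_zero]
  ring

lemma poissonKer_nonneg {z : ℂ} (hz : 0 ≤ z.im) (t : ℝ) : 0 ≤ poissonKer z t := by
  rw [poissonKer_eq_div_norm_sq]
  positivity

lemma integrable_poissonKer (z : ℂ) : Integrable (poissonKer z) := by
  rw [funext (poissonKer_eq_mul_inv_one_add_sq z)]
  rcases eq_or_ne z.im 0 with h | h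
  · simp [h]
  · exact ((integrable_inv_one_add_sq.comp_div h).comp_sub_right z.re).const_mul _

lemma integral_poissonKer {z : ℂ} (hz : 0 < z.im) : ∫ t, poissonKer z t = 1 := by
  simp_rw [poissonKer_eq_mul_inv_one_add_sq]
  rw [integral_const_mul,
    integral_sub_right_eq_self (fun t => (1 + (t / z.im) ^ 2)⁻¹) z.re,
    Measure.integral_comp_div (fun t => (1 + t ^ 2)⁻¹), integral_univ_inv_one_add_sq,
    abs_of_pos hz, smul_eq_mul]
  field_simp

lemma omegaSet_le_one {z : ℂ} (hz : 0 < z.im) (B : Set ℝ) : omegaSet z B ≤ 1 :=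
  integral_poissonKer hz ▸ setIntegral_le_integral (integrable_poissonKer z)
    (Filter.Eventually.of_forall (poissonKer_nonneg hz.le))

lemma poissonKer_le_of_two_mul_abs_le {z : ℂ} (hz : 0 < z.im) {t : ℝ} (ht : 2 * |t| ≤ ‖z‖) :
    poissonKer z t ≤ 4 / Real.pi * (z.im / ‖z‖ ^ 2) := by
  have hz0 : 0 < ‖z‖ := norm_pos_iff.2 fun h => by simp [h] at hz
  have hdist : ‖z‖ / 2 ≤ ‖z - t‖ := by
    have := norm_sub_norm_le z (t : ℂ)
    rw [Complex.norm_real, Real.norm_eq_abs] at this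
    linarith
  calc poissonKer z t = Real.pi⁻¹ * z.im / ‖z - t‖ ^ 2 := poissonKer_eq_div_norm_sq z t
    _ ≤ Real.pi⁻¹ * z.im / (‖z‖ / 2) ^ 2 := by gcongr
    _ = 4 / Real.pi * (z.im / ‖z‖ ^ 2) := by ring

lemma le_poissonKer_of_abs_le {z : ℂ} (hz : 0 < z.im) {t : ℝ} (ht : |t| ≤ ‖z‖) :
    (4 * Real.pi)⁻¹ * (z.im / ‖z‖ ^ 2) ≤ poissonKer z t := by
  have hpos : 0 < ‖z - t‖ := norm_pos_iff.2 fun h => by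
    simpa [hz.ne'] using congrArg Complex.im h
  have hdist : ‖z - t‖ ≤ 2 * ‖z‖ := by
    have := norm_sub_le z (t : ℂ)
    rw [Complex.norm_real, Real.norm_eq_abs] at this
    linarith
  calc (4 * Real.pi)⁻¹ * (z.im / ‖z‖ ^ 2) = Real.pi⁻¹ * z.im / (2 * ‖z‖) ^ 2 := by ring
    _ ≤ Real.pi⁻¹ * z.im / ‖z - t‖ ^ 2 := by gcongr
    _ = poissonKer z t := (poissonKer_eq_div_norm_sq z t).symm

lemma omegaSet_le_of_two_mul_abs_le {z : ℂ} (hz : 0 < z.im) {B : Set ℝ} (hB : volume B < ⊤)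
    (hBz : ∀ t ∈ B, 2 * |t| ≤ ‖z‖) :
    omegaSet z B ≤ 4 / Real.pi * (z.im / ‖z‖ ^ 2) * volume.real B :=
  (le_abs_self _).trans <| norm_setIntegral_le_of_norm_le_const hB fun t ht => by
    rw [Real.norm_of_nonneg (poissonKer_nonneg hz.le t)]
    exact poissonKer_le_of_two_mul_abs_le hz (hBz t ht)

lemma le_omegaSet_of_abs_le {z : ℂ} (hz : 0 < z.im) {B : Set ℝ} (hBm : MeasurableSet B)
    (hB : volume B ≠ ⊤) (hBz : ∀ t ∈ B, |t| ≤ ‖z‖) :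
    (4 * Real.pi)⁻¹ * (z.im / ‖z‖ ^ 2) * volume.real B ≤ omegaSet z B :=
  setIntegral_ge_of_const_le_real hBm hB (fun t ht => le_poissonKer_of_abs_le hz (hBz t ht))
    (integrable_poissonKer z).integrableOn

lemma setLIntegral_ofReal_lt_top_of_le_const_mul {α : Type*} [MeasurableSpace α]
    {μ : Measure α} {s t : Set α} {f g : α → ℝ} {C : ℝ} (hs : MeasurableSet s) (hst : s ⊆ t)
    (hC : 0 ≤ C) (hfg : ∀ x ∈ s, f x ≤ C * g x) (hg : ∫⁻ x in t, ENNReal.ofReal (g x) ∂μ < ⊤) :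
    ∫⁻ x in s, ENNReal.ofReal (f x) ∂μ < ⊤ :=
  calc ∫⁻ x in s, ENNReal.ofReal (f x) ∂μ
      ≤ ∫⁻ x in s, ENNReal.ofReal C * ENNReal.ofReal (g x) ∂μ :=
        setLIntegral_mono' hs fun x hx => by
          rw [← ENNReal.ofReal_mul hC]
          exact ENNReal.ofReal_le_ofReal (hfg x hx)
    _ = ENNReal.ofReal C * ∫⁻ x in s, ENNReal.ofReal (g x) ∂μ :=
        lintegral_const_mul' _ _ ENNReal.ofReal_ne_top
    _ ≤ ENNReal.ofReal C * ∫⁻ x in t, ENNReal.ofReal (g x) ∂μ := by gcongr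
    _ < ⊤ := ENNReal.mul_lt_top ENNReal.ofReal_lt_top hg

lemma lintegral_omegaSet_lt_top_of_blaschke (ν : Measure ℂ) [IsFiniteMeasureOnCompacts ν]
    {r0 : ℝ} (h : ∫⁻ z in {z : ℂ | 0 < z.im ∧ r0 ≤ ‖z‖}, ENNReal.ofReal (z.im / ‖z‖ ^ 2) ∂ν < ⊤)
    {B : Set ℝ} (hB : Bornology.IsBounded B) :
    ∫⁻ z in {z : ℂ | 0 < z.im}, ENNReal.ofReal (omegaSet z B) ∂ν < ⊤ := by
  obtain ⟨M, hM⟩ := hB.exists_norm_le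
  set R := max r0 (2 * M)
  rw [← lintegral_inter_add_sdiff _ _ (measurableSet_ball (x := (0 : ℂ)) (ε := R))]
  refine ENNReal.add_lt_top.2 ⟨?near, ?far⟩
  case near =>
    refine setLIntegral_lt_top_of_le_nnreal
      ((measure_mono Set.inter_subset_right).trans_lt measure_ball_lt_top).ne ⟨1, fun z hz => ?_⟩
    simpa using omegaSet_le_one hz.1 B
  case far =>
    refine setLIntegral_ofReal_lt_top_of_le_const_mul
      (measurableSet_lt measurable_const Complex.measurable_im |>.diff measurableSet_ball)
      ?_ (by positivity : 0 ≤ 4 / Real.pi * volume.real B) ?_ h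
    · rintro z ⟨hz, hzR⟩
      have hRz : R ≤ ‖z‖ := by simpa using hzR
      exact ⟨hz, le_of_max_le_left hRz⟩
    · rintro z ⟨hz, hzR⟩
      have hRz : R ≤ ‖z‖ := by simpa using hzR
      have hBz : ∀ t ∈ B, 2 * |t| ≤ ‖z‖ := fun t ht =>
        le_trans (by simpa using hM t ht) (le_of_max_le_right hRz)
      calc omegaSet z B ≤ 4 / Real.pi * (z.im / ‖z‖ ^ 2) * volume.real B :=
            omegaSet_le_of_two_mul_abs_le hz hB.measure_lt_top hBz
        _ = 4 / Real.pi * volume.real B * (z.im / ‖z‖ ^ 2) := by ring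

lemma exists_blaschke_of_lintegral_omegaSet_lt_top (ν : Measure ℂ) {B : Set ℝ}
    (hBm : MeasurableSet B) (hBb : Bornology.IsBounded B) (hB0 : 0 < volume B)
    (h : ∫⁻ z in {z : ℂ | 0 < z.im}, ENNReal.ofReal (omegaSet z B) ∂ν < ⊤) :
    ∃ r0 : ℝ, 0 < r0 ∧
      ∫⁻ z in {z : ℂ | 0 < z.im ∧ r0 ≤ ‖z‖}, ENNReal.ofReal (z.im / ‖z‖ ^ 2) ∂ν < ⊤ := by
  obtain ⟨M, hM⟩ := hBb.exists_norm_le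
  have hvol : 0 < volume.real B := ENNReal.toReal_pos hB0.ne' hBb.measure_lt_top.ne
  refine ⟨max M 1, by positivity, setLIntegral_ofReal_lt_top_of_le_const_mul
    ((measurableSet_lt measurable_const Complex.measurable_im).inter
      (measurableSet_le measurable_const measurable_norm)) (fun z hz => hz.1)
    (by positivity : 0 ≤ 4 * Real.pi / volume.real B) (fun z ⟨hz, hMz⟩ => ?_) h⟩
  have hBz : ∀ t ∈ B, |t| ≤ ‖z‖ := fun t ht =>
    le_trans (by simpa using hM t ht) (le_of_max_le_left hMz)
  calc z.im / ‖z‖ ^ 2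
      = 4 * Real.pi / volume.real B * ((4 * Real.pi)⁻¹ * (z.im / ‖z‖ ^ 2) * volume.real B) := by
        field_simp
    _ ≤ 4 * Real.pi / volume.real B * omegaSet z B := by
        gcongr
        exact le_omegaSet_of_abs_le hz hBm hBb.measure_lt_top.ne hBz

theorem stmt_18 (ν : Measure ℂ) [IsFiniteMeasureOnCompacts ν] :
    ((∀ t1 t2 : ℝ, t1 < t2 →
        (∫⁻ z in {z : ℂ | 0 < z.im},
            ENNReal.ofReal (omegaSet z (Set.Icc t1 t2)) ∂ν) < ⊤) ↔
      (∃ B : Set ℝ, MeasurableSet B ∧ Bornology.IsBounded B ∧ 0 < volume B ∧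
        (∫⁻ z in {z : ℂ | 0 < z.im}, ENNReal.ofReal (omegaSet z B) ∂ν) < ⊤)) ∧
    ((∃ B : Set ℝ, MeasurableSet B ∧ Bornology.IsBounded B ∧ 0 < volume B ∧
        (∫⁻ z in {z : ℂ | 0 < z.im}, ENNReal.ofReal (omegaSet z B) ∂ν) < ⊤) ↔
      (∃ r0 : ℝ, 0 < r0 ∧
        (∫⁻ z in {z : ℂ | 0 < z.im ∧ r0 ≤ ‖z‖},
            ENNReal.ofReal (z.im / ‖z‖ ^ 2) ∂ν) < ⊤)) := by
  have hIcc : 0 < volume (Set.Icc (0 : ℝ) 1) := by simp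
  refine ⟨⟨fun h => ?_, ?_⟩, ⟨?_, ?_⟩⟩
  · exact ⟨_, measurableSet_Icc, Metric.isBounded_Icc 0 1, hIcc, h 0 1 one_pos⟩
  · rintro ⟨B, hBm, hBb, hB0, hB⟩ t1 t2 -
    obtain ⟨r0, -, h⟩ := exists_blaschke_of_lintegral_omegaSet_lt_top ν hBm hBb hB0 hB
    exact lintegral_omegaSet_lt_top_of_blaschke ν h (Metric.isBounded_Icc t1 t2)
  · rintro ⟨B, hBm, hBb, hB0, hB⟩
    exact exists_blaschke_of_lintegral_omegaSet_lt_top ν hBm hBb hB0 hB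
  · rintro ⟨r0, -, h⟩
    exact ⟨_, measurableSet_Icc, Metric.isBounded_Icc 0 1, hIcc,
      lintegral_omegaSet_lt_top_of_blaschke ν h (Metric.isBounded_Icc 0 1)⟩
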